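/- The Rauzy–Veech elementary step preserves the absence of connections. Let T be an interval exchange transformation on d ≥ 2 intervals with irreducible combinatorial data and no connections (in particular u_{d−1}(T) ≠ v_{d−1}(T)). Then the first-return map T̂ of T to the interval Î := [0, max(u_{d−1}(T), v_{d−1}(T))) is again an interval exchange transformation on d intervals with irreducible combinatorial data, and T̂ has no connections. -/

import Mathlib

/-!
Suppose the last top interval is the longer one, `u_{d-1} < v_{d-1}`, and write `αt`, `αb` for
the last top and bottom letters. On `Î = [0, v_{d-1})` the first return of `T` is `T` itself,
except on `I^t_{αb}`: its image `I^b_{αb} = [v_{d-1}, |I|)` lies inside `I^t_{αt}`, and one more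
step brings it back into `Î`. The induced map is the i.e.t. obtained by moving `αb` just after
`αt` on the bottom row and shortening `λ_{αt}` by `λ_{αb}`. Its top singularities are those of
`T`, and each bottom singularity is either one of `T` or `T(v_{d-1})`; since orbits of the induced
map are sub-orbits of `T`, a connection of `T̂` yields one of `T`.

The case `v_{d-1} < u_{d-1}` is the same statement for `T⁻¹`, the i.e.t. with the two rows
exchanged, and `u_{d-1} = v_{d-1}` is itself a connection.
-/
open scoped Classical
open Set Filter MeasureTheory

namespace IETPaper

/-- An interval exchange transformation on `d` intervals: positive length data indexed by
an alphabet of `d` letters (here `Fin d`), together with irreducible combinatorial data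
given by a pair of bijections (`pit` = top, `pib` = bottom, with values `0,…,d-1`
corresponding to positions `1,…,d`). -/
structure IET (d : ℕ) where
  lam : Fin d → ℝ
  lam_pos : ∀ a, 0 < lam a
  pit : Fin d ≃ Fin d
  pib : Fin d ≃ Fin d
  irred : ∀ k : ℕ, 0 < k → k < d →
    Finset.univ.filter (fun a => (pit a : ℕ) < k) ≠
      Finset.univ.filter (fun a => (pib a : ℕ) < k)

namespace IET

variable {d : ℕ}

/-- Total length of the interval `I(T)`. -/
noncomputable def len (T : IET d) : ℝ := ∑ a, T.lam a

/-- The singularity data: `u k = Σ_{π_t(α) ≤ k} λ_α` (0-indexed: sum of the lengths of the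
first `k` top intervals). -/
noncomputable def upt (T : IET d) (k : ℕ) : ℝ :=
  ∑ a ∈ Finset.univ.filter (fun a => (T.pit a : ℕ) < k), T.lam a

/-- `v k`: the singularities of `T⁻¹`. -/
noncomputable def vpt (T : IET d) (k : ℕ) : ℝ :=
  ∑ a ∈ Finset.univ.filter (fun a => (T.pib a : ℕ) < k), T.lam a

/-- Left endpoint of the top interval `I_α^t(T)`. -/
noncomputable def lept (T : IET d) (a : Fin d) : ℝ := T.upt (T.pit a)

/-- Right endpoint of the top interval `I_α^t(T)`. -/
noncomputable def rept (T : IET d) (a : Fin d) : ℝ := T.upt (T.pit a) + T.lam a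

/-- Left endpoint of the bottom interval `I_α^b(T)`. -/
noncomputable def lepb (T : IET d) (a : Fin d) : ℝ := T.vpt (T.pib a)

/-- Right endpoint of the bottom interval `I_α^b(T)`. -/
noncomputable def repb (T : IET d) (a : Fin d) : ℝ := T.vpt (T.pib a) + T.lam a

/-- The top interval `I_α^t(T)` (half-open). -/
def topI (T : IET d) (a : Fin d) : Set ℝ := Set.Ico (T.lept a) (T.rept a)

/-- The bottom interval `I_α^b(T)` (half-open). -/
def botI (T : IET d) (a : Fin d) : Set ℝ := Set.Ico (T.lepb a) (T.repb a)

/-- The interval `I(T) = [0, len T)`. -/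
def domain (T : IET d) : Set ℝ := Set.Ico 0 T.len

/-- The interval exchange map: on each `I_α^t(T)` it is the translation taking `I_α^t(T)`
onto `I_α^b(T)` (and the identity outside the top intervals, as junk value). -/
noncomputable def toFun (T : IET d) (x : ℝ) : ℝ :=
  if h : ∃ a : Fin d, x ∈ T.topI a then x - T.lept h.choose + T.lepb h.choose
  else x

/-- `T` has a connection: a triple `(u_k, v_l, m)` with `0 < k, l < d`, `m ≥ 0`
and `T^m (v_l) = u_k`. -/
def HasConnection (T : IET d) : Prop :=
  ∃ k l m : ℕ, 0 < k ∧ k < d ∧ 0 < l ∧ l < d ∧ T.toFun^[m] (T.vpt l) = T.upt k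

def NoConnections (T : IET d) : Prop := ¬ T.HasConnection

/-- The permutation `σ` on `𝒜 × {L, R}` (here `L = false`, `R = true`) whose cycles
correspond to the marked points of the suspended translation surface. -/
noncomputable def bnext (T : IET d) (c : Fin d × Bool) : Fin d × Bool :=
  if c.2 then
    if h : (T.pit c.1 : ℕ) + 1 < d then (T.pit.symm ⟨(T.pit c.1 : ℕ) + 1, h⟩, false)
    else (T.pib.symm ⟨d - 1, by have := c.1.pos; omega⟩, true)
  else
    if _h : 0 < (T.pib c.1 : ℕ) then
      (T.pib.symm ⟨(T.pib c.1 : ℕ) - 1, by have := (T.pib c.1).isLt; omega⟩, true)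
    else (T.pit.symm ⟨0, c.1.pos⟩, false)

/-- The cycle (orbit under `σ`) of an element of `𝒜 × {L, R}`. -/
noncomputable def cycleOf (T : IET d) (c : Fin d × Bool) : Finset (Fin d × Bool) :=
  Finset.univ.filter (fun c' => ∃ n : ℕ, T.bnext^[n] c = c')

/-- Number of cycles of `σ`, i.e. number of marked points `s`. -/
noncomputable def numCycles (T : IET d) : ℕ :=
  Set.ncard {O : Set (Fin d × Bool) | ∃ c, O = {c' | ∃ n : ℕ, T.bnext^[n] c = c'}}

/-- The antisymmetric matrix `Ω(π)`. -/
noncomputable def Omega (T : IET d) : Matrix (Fin d) (Fin d) ℝ :=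
  fun a b =>
    if (T.pit a : ℕ) < (T.pit b : ℕ) ∧ (T.pib b : ℕ) < (T.pib a : ℕ) then 1
    else if (T.pit b : ℕ) < (T.pit a : ℕ) ∧ (T.pib a : ℕ) < (T.pib b : ℕ) then -1
    else 0

/-- The genus `g`: half the rank of `Ω(π)`. -/
noncomputable def genus (T : IET d) : ℕ := T.Omega.rank / 2

end IET

/-- Sign `ε(c)`: `+1` on right endpoints, `-1` on left endpoints. -/
noncomputable def bsign {d : ℕ} (c : Fin d × Bool) : ℝ := if c.2 then 1 else -1

/-- The component of the boundary operator corresponding to the cycle of `c`, applied to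
an assignment `f` of (one-sided limit) values to the elements of `𝒜 × {L, R}`. -/
noncomputable def cycleSum {d : ℕ} (T : IET d) (f : Fin d × Bool → ℝ) (c : Fin d × Bool) : ℝ :=
  ∑ c' ∈ T.cycleOf c, bsign c' * f c'

/-- `∂ f = 0` : all cycle components of the boundary operator vanish. -/
def BoundaryZero {d : ℕ} (T : IET d) (f : Fin d × Bool → ℝ) : Prop :=
  ∀ c, cycleSum T f c = 0

/-- First return time of `x` to `J` under `f` (junk if it does not return). -/
noncomputable def firstReturnTime (f : ℝ → ℝ) (J : Set ℝ) (x : ℝ) : ℕ :=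
  sInf {n : ℕ | 0 < n ∧ f^[n] x ∈ J}

/-- First return map of `f` to `J`. -/
noncomputable def firstReturnMap (f : ℝ → ℝ) (J : Set ℝ) (x : ℝ) : ℝ :=
  f^[firstReturnTime f J x] x

/-- The Rauzy–Veech tower over an i.e.t. `T` with no connections: the sequence `T(n)` of
i.e.t.'s produced by the Rauzy–Veech algorithm (`T(n+1)` is the first-return map of `T(n)`
to `I(n+1) = [0, max (u_{d-1}(T(n)), v_{d-1}(T(n))))`), together with the Kontsevich–Zorich
cocycle matrices `B(m,n)` with their defining properties. -/
structure RVTower (d : ℕ) (T : IET d) where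
  iet : ℕ → IET d
  iet_zero : iet 0 = T
  len_succ : ∀ n, (iet (n+1)).len = max ((iet n).upt (d-1)) ((iet n).vpt (d-1))
  step : ∀ n, ∃ F : Finset ℝ, ∀ x ∈ (iet (n+1)).domain, x ∉ F →
    (iet (n+1)).toFun x = firstReturnMap (iet n).toFun (iet (n+1)).domain x
  B : ℕ → ℕ → Matrix (Fin d) (Fin d) ℕ
  B_self : ∀ m, B m m = 1
  B_cocycle : ∀ m n p, m ≤ n → n ≤ p → B m p = B n p * B m n
  B_lam : ∀ m n, m ≤ n → ∀ b, (iet m).lam b = ∑ a, (B m n a b : ℝ) * (iet n).lam a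
  B_visits : ∀ m n, m ≤ n → ∀ a b : Fin d, ∃ x ∈ (iet n).topI a,
    (B m n a b : ℕ) = Nat.card {j : ℕ |
      j < firstReturnTime (iet m).toFun (iet n).domain x ∧ (iet m).toFun^[j] x ∈ (iet m).topI b}

namespace RVTower

variable {d : ℕ} {T : IET d}

/-- The accelerated (Yoccoz) times: `n_0 = 0` and `n_{k+1}` is the smallest `n` such that
all entries of `B(n_k, n)` are positive. -/
noncomputable def acc (tw : RVTower d T) : ℕ → ℕ
  | 0 => 0
  | k + 1 => sInf {n : ℕ | ∀ a b : Fin d, 0 < tw.B (RVTower.acc tw k) n a b}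

end RVTower

/-- The norm of a (Kontsevich–Zorich) matrix: sum of (absolute values of) its entries. -/
noncomputable def mnorm {d : ℕ} (M : Matrix (Fin d) (Fin d) ℕ) : ℝ := ∑ a, ∑ b, (M a b : ℝ)

/-- Norm of a vector in `Γ(T(n)) ≅ ℝ^𝒜`. -/
noncomputable def vnorm {d : ℕ} (v : Fin d → ℝ) : ℝ := ∑ a, |v a|

/-- Action of a Kontsevich–Zorich matrix on `Γ ≅ ℝ^𝒜` (the special Birkhoff sum operator
on piecewise constant functions). -/
noncomputable def bAct {d : ℕ} (M : Matrix (Fin d) (Fin d) ℕ) (v : Fin d → ℝ) : Fin d → ℝ :=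
  fun a => ∑ b, (M a b : ℝ) * v b

/-- The special Birkhoff sum `S(m,n)φ` evaluated at `x ∈ I(n)`. -/
noncomputable def sBS {d : ℕ} {T : IET d} (tw : RVTower d T) (m n : ℕ) (φ : ℝ → ℝ) (x : ℝ) :
    ℝ :=
  ∑ j ∈ Finset.range (firstReturnTime (tw.iet m).toFun (tw.iet n).domain x),
    φ ((tw.iet m).toFun^[j] x)

/-- `Γ₀(T(n))`: vectors (piecewise constant functions) with zero average. -/
def Gamma0 {d : ℕ} {T : IET d} (tw : RVTower d T) (n : ℕ) : Set (Fin d → ℝ) :=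
  {v | ∑ a, v a * (tw.iet n).lam a = 0}

/-- Condition (a) of the Diophantine class `DC(η, θ, σ)`. -/
def CondA {d : ℕ} {T : IET d} (tw : RVTower d T) (η : ℝ) : Prop :=
  ∀ ε > (0:ℝ), ∃ C > (0:ℝ), ∀ k : ℕ,
    mnorm (tw.B (tw.acc k) (tw.acc (k+1))) ≤ C * mnorm (tw.B 0 (tw.acc k)) ^ (η + ε)

/-- Condition (b) of the Diophantine class `DC(η, θ, σ)`. -/
def CondB {d : ℕ} {T : IET d} (tw : RVTower d T) (θ : ℝ) : Prop :=
  ∃ C > (0:ℝ), ∀ k : ℕ, ∀ v ∈ Gamma0 tw 0,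
    vnorm (bAct (tw.B 0 (tw.acc k)) v) ≤ C * mnorm (tw.B 0 (tw.acc k)) ^ (1 - θ) * vnorm v

/-- The stable space `Γ_s(T(n_p))` (as a set). -/
def stableSet {d : ℕ} {T : IET d} (tw : RVTower d T) (σ : ℝ) (p : ℕ) : Set (Fin d → ℝ) :=
  {v | ∃ C : ℝ, ∀ q, p ≤ q →
    vnorm (bAct (tw.B (tw.acc p) (tw.acc q)) v) ≤ C * mnorm (tw.B (tw.acc p) (tw.acc q)) ^ (-σ)}

/-- The quotient norm on `Γ(T(n_p))/Γ_s(T(n_p))`. -/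
noncomputable def qnorm {d : ℕ} {T : IET d} (tw : RVTower d T) (σ : ℝ) (p : ℕ)
    (v : Fin d → ℝ) : ℝ :=
  sInf {r : ℝ | ∃ χ ∈ stableSet tw σ p, r = vnorm (v - χ)}

/-- Condition (c) of the Diophantine class `DC(η, θ, σ)`. -/
def CondC {d : ℕ} {T : IET d} (tw : RVTower d T) (σ : ℝ) : Prop :=
  (∀ k l, k ≤ l → ∀ v ∈ stableSet tw σ k,
    bAct (tw.B (tw.acc k) (tw.acc l)) v ∈ stableSet tw σ l) ∧
  (∀ ε > (0:ℝ), ∃ C > (0:ℝ), ∀ k l, k ≤ l → ∀ v ∈ stableSet tw σ k,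
    vnorm (bAct (tw.B (tw.acc k) (tw.acc l)) v) ≤ C * mnorm (tw.B 0 (tw.acc l)) ^ ε * vnorm v) ∧
  (∀ ε > (0:ℝ), ∃ C > (0:ℝ), ∀ k l, k ≤ l → ∀ v : Fin d → ℝ,
    qnorm tw σ l (bAct (tw.B (tw.acc k) (tw.acc l)) v) ≤
      C * mnorm (tw.B 0 (tw.acc l)) ^ ε * qnorm tw σ k v)

/-- Dimension `μ` of the stable space `Γ_s(T)`. -/
noncomputable def stableDim {d : ℕ} {T : IET d} (tw : RVTower d T) (σ : ℝ) : ℕ :=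
  Module.finrank ℝ (Submodule.span ℝ (stableSet tw σ 0))

/-- Condition (d) of the Diophantine class `DC(η, θ, σ)`. -/
def CondD {d : ℕ} {T : IET d} (tw : RVTower d T) (σ : ℝ) : Prop :=
  stableDim tw σ < T.genus →
    ∀ v : Fin d → ℝ, v ∉ Submodule.span ℝ (stableSet tw σ 0) →
      ∃ c > (0:ℝ), ∃ᶠ n in atTop, c ≤ vnorm (bAct (tw.B 0 n) v)

/-- The Diophantine class `DC(η, θ, σ)`. -/
def DC {d : ℕ} {T : IET d} (tw : RVTower d T) (η θ σ : ℝ) : Prop :=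
  CondA tw η ∧ CondB tw θ ∧ CondC tw σ ∧ CondD tw σ

/-- One-sided limit values at the endpoints of the continuity intervals of the `i`-th
derivative of a family `Φ` (where `Φ a` represents the restriction of the function to
`cl (I_a^t(T))`). -/
noncomputable def sideVal {d : ℕ} (T : IET d) (Φ : Fin d → ℝ → ℝ) (i : ℕ)
    (c : Fin d × Bool) : ℝ :=
  iteratedDerivWithin i (Φ c.1) (Set.Icc (T.lept c.1) (T.rept c.1))
    (if c.2 then T.rept c.1 else T.lept c.1)

/-- Membership in `C^{r+BV}(⊔_α I_α^t(T))`: `C^r` on each closed continuity interval, with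
`r`-th derivative of bounded variation. -/
def MemCrBV {d : ℕ} (T : IET d) (r : ℕ) (Φ : Fin d → ℝ → ℝ) : Prop :=
  (∀ a, ContDiffOn ℝ r (Φ a) (Set.Icc (T.lept a) (T.rept a))) ∧
  (∀ a, BoundedVariationOn
    (iteratedDerivWithin r (Φ a) (Set.Icc (T.lept a) (T.rept a)))
    (Set.Icc (T.lept a) (T.rept a)))

/-- Membership in `C^{r+BV}_∂(⊔_α I_α^t(T))`: moreover `∂ D^i Φ = 0` for `0 ≤ i < r`. -/
def MemCrBVD {d : ℕ} (T : IET d) (r : ℕ) (Φ : Fin d → ℝ → ℝ) : Prop :=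
  MemCrBV T r Φ ∧ ∀ i < r, BoundaryZero T (sideVal T Φ i)

/-- Sup of `|f|` over `s`. -/
noncomputable def supAbsOn (f : ℝ → ℝ) (s : Set ℝ) : ℝ := sSup ((fun x => |f x|) '' s)

/-- The `C^{r+BV}` norm. -/
noncomputable def crbvNorm {d : ℕ} (T : IET d) (r : ℕ) (Φ : Fin d → ℝ → ℝ) : ℝ :=
  (∑ i ∈ Finset.range (r+1), ∑ a,
    supAbsOn (iteratedDerivWithin i (Φ a) (Set.Icc (T.lept a) (T.rept a)))
      (Set.Icc (T.lept a) (T.rept a))) +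
  ∑ a, (eVariationOn (iteratedDerivWithin r (Φ a) (Set.Icc (T.lept a) (T.rept a)))
      (Set.Icc (T.lept a) (T.rept a))).toReal

/-- The `C^k` norm on `C^k(cl I(T))`. -/
noncomputable def ckNorm {d : ℕ} (T : IET d) (k : ℕ) (u : ℝ → ℝ) : ℝ :=
  ∑ i ∈ Finset.range (k+1),
    supAbsOn (iteratedDerivWithin i u (Set.Icc 0 T.len)) (Set.Icc 0 T.len)

/-- Value of the `i`-th derivative of a piecewise polynomial (element of `Γ(r)`) at the
endpoints of the continuity intervals. -/
noncomputable def polySideVal {d : ℕ} (T : IET d) (P : Fin d → Polynomial ℝ) (i : ℕ)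
    (c : Fin d × Bool) : ℝ :=
  (Polynomial.derivative^[i] (P c.1)).eval (if c.2 then T.rept c.1 else T.lept c.1)

/-- Membership in `Γ_∂(r)`: piecewise polynomial of degree `< r` with `∂ D^i = 0` for
all `0 ≤ i < r`. -/
def MemGammaDel {d : ℕ} (T : IET d) (r : ℕ) (P : Fin d → Polynomial ℝ) : Prop :=
  (∀ a, (P a).degree < (r : ℕ)) ∧ ∀ i < r, BoundaryZero T (polySideVal T P i)

/-- Membership in `Γ_T(r)`: piecewise polynomials of degree `< r` of the form
`ψ ∘ T - ψ` with `ψ ∈ C^{r-1}(cl I(T))`. -/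
def MemGammaT {d : ℕ} (T : IET d) (r : ℕ) (P : Fin d → Polynomial ℝ) : Prop :=
  (∀ a, (P a).degree < (r : ℕ)) ∧
  ∃ ψ : ℝ → ℝ, ContDiffOn ℝ (r-1 : ℕ) ψ (Set.Icc 0 T.len) ∧
    ∀ a, ∀ x ∈ T.topI a, (P a).eval x = ψ (T.toFun x) - ψ x

/-- `Γ_∂(T) = Γ(T) ∩ ker ∂` as a submodule of `Γ(T) ≅ ℝ^𝒜`. -/
noncomputable def gammaDelVec {d : ℕ} (T : IET d) : Submodule ℝ (Fin d → ℝ) where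
  carrier := {v | ∀ c, cycleSum T (fun c' => v c'.1) c = 0}
  add_mem' := by
    intro v w hv hw
    intro c
    have h1 := hv c
    have h2 := hw c
    simp only [cycleSum, Pi.add_apply, mul_add, Finset.sum_add_distrib] at *
    rw [h1, h2]; ring
  zero_mem' := by
    intro c
    simp [cycleSum]
  smul_mem' := by
    intro t v hv c
    have h1 := hv c
    simp only [cycleSum, Pi.smul_apply, smul_eq_mul] at *
    calc ∑ c' ∈ T.cycleOf c, bsign c' * (t * v c'.1)
        = t * ∑ c' ∈ T.cycleOf c, bsign c' * v c'.1 := by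
          rw [Finset.mul_sum]; exact Finset.sum_congr rfl (fun c' _ => by ring)
      _ = 0 := by rw [h1, mul_zero]

/-- The operator norm of the restriction of `B(n_p, n_q)` to `Γ₀(T(n_p))`. -/
noncomputable def restNorm {d : ℕ} {T : IET d} (tw : RVTower d T) (p q : ℕ) : ℝ :=
  sSup {r : ℝ | ∃ v ∈ Gamma0 tw (tw.acc p), vnorm v ≤ 1 ∧
    r = vnorm (bAct (tw.B (tw.acc p) (tw.acc q)) v)}

/-- The `BV` norm (total variation) of a function on `⊔_α I_α^t(T)`. -/
noncomputable def bvNorm {d : ℕ} (T : IET d) (φ : ℝ → ℝ) : ℝ :=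
  ∑ a, (eVariationOn φ (T.topI a)).toReal

lemma leftInvOn_iterate {α : Type*} {f g : α → α} {s : Set α} (h : LeftInvOn g f s)
    (hf : MapsTo f s s) (m : ℕ) : LeftInvOn g^[m] f^[m] s := by
  induction m with
  | zero => exact fun _ _ => rfl
  | succ m ih =>
    intro x hx
    rw [Function.iterate_succ_apply, Function.iterate_succ_apply', h (hf.iterate m hx), ih hx]

lemma firstReturnTime_eq {f : ℝ → ℝ} {J : Set ℝ} {x : ℝ} {n : ℕ} (hn : 0 < n)
    (hJ : f^[n] x ∈ J) (hmin : ∀ k, 0 < k → k < n → f^[k] x ∉ J) :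
    firstReturnTime f J x = n :=
  le_antisymm (Nat.sInf_le ⟨hn, hJ⟩)
    (le_csInf ⟨n, hn, hJ⟩ fun k hk => not_lt.1 fun hkn => hmin k hk.1 hkn hk.2)

def IsReturnWithinTwo {α : Type*} (f : α → α) (J : Set α) (g : α → α) : Prop :=
  ∀ x ∈ J, (f x ∈ J ∧ g x = f x) ∨ (f x ∉ J ∧ f (f x) ∈ J ∧ g x = f (f x))

namespace IsReturnWithinTwo

variable {α : Type*} {f g : α → α} {J : Set α}

lemma mapsTo (h : IsReturnWithinTwo f J g) : MapsTo g J J := fun x hx => by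
  rcases h x hx with ⟨h1, h2⟩ | ⟨-, h1, h2⟩ <;> rw [h2] <;> exact h1

lemma exists_iterate_eq (h : IsReturnWithinTwo f J g) {x : α} (hx : x ∈ J) (m : ℕ) :
    ∃ M, g^[m] x = f^[M] x := by
  induction m generalizing x with
  | zero => exact ⟨0, rfl⟩
  | succ m ih =>
    obtain ⟨M, hM⟩ := ih (h.mapsTo hx)
    rw [Function.iterate_succ_apply, hM]
    rcases h x hx with ⟨-, h2⟩ | ⟨-, -, h2⟩
    · exact ⟨M + 1, by rw [h2, Function.iterate_add_apply, Function.iterate_one]⟩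
    · exact ⟨M + 2, by rw [h2, Function.iterate_add_apply]; rfl⟩

lemma eq_firstReturnMap {f g : ℝ → ℝ} {J : Set ℝ} (h : IsReturnWithinTwo f J g) {x : ℝ}
    (hx : x ∈ J) : g x = firstReturnMap f J x := by
  rcases h x hx with ⟨h1, h2⟩ | ⟨h1, h2, h3⟩
  · rw [firstReturnMap, firstReturnTime_eq one_pos h1 (fun k hk hk1 => by omega), h2,
      Function.iterate_one]
  · have hmin : ∀ k, 0 < k → k < 2 → f^[k] x ∉ J := fun k hk hk2 => by
      obtain rfl : k = 1 := by omega
      exact h1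
    rw [firstReturnMap, firstReturnTime_eq two_pos h2 hmin, h3]
    rfl

/-- Transport along inverses: `f'`, `g'` play the roles of `f⁻¹`, `g⁻¹`. -/
lemma of_inv {f' g' : α → α} {D : Set α} (h : IsReturnWithinTwo f' J g') (hJD : J ⊆ D)
    (hf' : MapsTo f' D D) (hff' : LeftInvOn f f' D) (hg : MapsTo g J J)
    (hgg' : LeftInvOn g' g J) : IsReturnWithinTwo f J g := fun x hx => by
  have hy := hg hx
  rcases h (g x) hy with ⟨-, h2⟩ | ⟨h1, -, h3⟩
  · have hfx : f x = g x := by rw [← hff' (hJD hy), ← h2, hgg' hx]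
    exact Or.inl ⟨hfx ▸ hy, hfx.symm⟩
  · have hfx : f x = f' (g x) := by rw [← hff' (hf' (hJD hy)), ← h3, hgg' hx]
    refine Or.inr ⟨hfx ▸ h1, ?_, ?_⟩ <;> rw [hfx, hff' (hJD hy)]
    exact hy

end IsReturnWithinTwo

lemma val_cycleIcc_last {n : ℕ} {p : Fin (n + 1)} (hp : (p : ℕ) < n) (k : Fin (n + 1)) :
    (Fin.cycleIcc (p + 1) (Fin.last n) k : ℕ) =
      if (k : ℕ) ≤ p then (k : ℕ) else if (k : ℕ) = n then (p : ℕ) + 1 else (k : ℕ) + 1 := by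
  have hp1 : ((p + 1 : Fin (n + 1)) : ℕ) = p + 1 := Fin.val_add_one_of_lt' (by omega)
  rcases lt_or_ge (k : ℕ) (p + 1) with hk | hk
  · rw [Fin.cycleIcc_of_lt (Fin.lt_def.2 (by omega)), if_pos (by omega)]
  · rw [Fin.cycleIcc_of_le_of_le (by rw [Fin.le_def, hp1]; exact hk) (Fin.le_last k),
      if_neg (show ¬ (k : ℕ) ≤ p by omega)]
    simp only [Fin.ext_iff, Fin.val_last]
    split_ifs
    · exact hp1
    · exact Fin.val_add_one_of_lt' (by omega)

namespace IET

variable {d : ℕ} (T : IET d)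

def inv : IET d where
  lam := T.lam
  lam_pos := T.lam_pos
  pit := T.pib
  pib := T.pit
  irred k hk hkd := (T.irred k hk hkd).symm

lemma upt_nonneg (k : ℕ) : 0 ≤ T.upt k :=
  Finset.sum_nonneg fun a _ => (T.lam_pos a).le

lemma upt_le_len (k : ℕ) : T.upt k ≤ T.len :=
  Finset.sum_le_univ_sum_of_nonneg fun a => (T.lam_pos a).le

lemma upt_mono : Monotone T.upt := fun k l hkl =>
  Finset.sum_le_sum_of_subset_of_nonneg
    (fun a ha => by simp only [Finset.mem_filter, Finset.mem_univ, true_and] at ha ⊢; omega)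
    fun a _ _ => (T.lam_pos a).le

lemma upt_of_le {k : ℕ} (hk : d ≤ k) : T.upt k = T.len := by
  rw [upt, Finset.filter_true_of_mem fun a _ => (T.pit a).isLt.trans_le hk, len]

lemma rept_eq_upt (a : Fin d) : T.rept a = T.upt (T.pit a + 1) := by
  have : Finset.univ.filter (fun b => (T.pit b : ℕ) < T.pit a + 1) =
      insert a (Finset.univ.filter fun b => (T.pit b : ℕ) < T.pit a) := by
    ext b
    simp only [Finset.mem_filter, Finset.mem_univ, true_and, Finset.mem_insert, Nat.lt_succ_iff,
      le_iff_eq_or_lt, Fin.val_inj, EmbeddingLike.apply_eq_iff_eq]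
  rw [rept, upt, upt, this, Finset.sum_insert (by simp), add_comm]

lemma lept_lt_rept (a : Fin d) : T.lept a < T.rept a :=
  lt_add_of_pos_right _ (T.lam_pos a)

lemma upt_lt_len {k : ℕ} (hk : k < d) : T.upt k < T.len := by
  have h := T.lept_lt_rept (T.pit.symm ⟨k, hk⟩)
  rw [T.rept_eq_upt] at h
  simpa [lept] using h.trans_le (T.upt_le_len _)

lemma upt_mem_domain {k : ℕ} (hk : k < d) : T.upt k ∈ T.domain :=
  ⟨T.upt_nonneg k, T.upt_lt_len hk⟩

lemma topI_subset_Ico (a : Fin d) : T.topI a ⊆ Ico 0 (T.upt (T.pit a + 1)) :=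
  fun _ hx => ⟨(T.upt_nonneg _).trans hx.1, T.rept_eq_upt a ▸ hx.2⟩

lemma rept_le_lept {a b : Fin d} (h : T.pit a < T.pit b) : T.rept a ≤ T.lept b := by
  rw [rept_eq_upt]
  exact T.upt_mono (Nat.succ_le_of_lt h)

lemma eq_of_mem_topI {a b : Fin d} {x : ℝ} (ha : x ∈ T.topI a) (hb : x ∈ T.topI b) :
    a = b := by
  by_contra hab
  rcases lt_or_gt_of_ne (T.pit.injective.ne hab) with h | h
  · exact (ha.2.trans_le ((T.rept_le_lept h).trans hb.1)).false
  · exact (hb.2.trans_le ((T.rept_le_lept h).trans ha.1)).false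

lemma exists_mem_topI {x : ℝ} (hx : x ∈ T.domain) : ∃ a, x ∈ T.topI a := by
  have hex : ∃ k, x < T.upt (k + 1) := ⟨d, by rw [T.upt_of_le (by omega)]; exact hx.2⟩
  have hd : 0 < d := Nat.pos_of_ne_zero <| by
    rintro rfl
    exact absurd (hx.1.trans_lt hx.2) (by simp [len])
  have hkd : Nat.find hex < d := by
    have := Nat.find_min' hex (m := d - 1) (by rw [T.upt_of_le (by omega)]; exact hx.2)
    omega
  have hle : T.upt (Nat.find hex) ≤ x := by
    rcases Nat.eq_zero_or_pos (Nat.find hex) with h0 | hpos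
    · rw [h0]
      simpa [upt] using hx.1
    · simpa [Nat.sub_add_cancel hpos] using Nat.find_min hex (m := Nat.find hex - 1) (by omega)
  refine ⟨T.pit.symm ⟨_, hkd⟩, ?_, ?_⟩
  · simpa only [topI, lept, Equiv.apply_symm_apply] using hle
  · simpa [rept_eq_upt] using Nat.find_spec hex

lemma toFun_of_mem_topI {a : Fin d} {x : ℝ} (hx : x ∈ T.topI a) :
    T.toFun x = x - T.lept a + T.lepb a := by
  have hex : ∃ b, x ∈ T.topI b := ⟨a, hx⟩
  rw [toFun, dif_pos hex, T.eq_of_mem_topI hex.choose_spec hx]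

lemma toFun_mem_botI {a : Fin d} {x : ℝ} (hx : x ∈ T.topI a) : T.toFun x ∈ T.botI a := by
  have h2 : x < T.lept a + T.lam a := hx.2
  rw [T.toFun_of_mem_topI hx]
  exact ⟨by linarith [hx.1], show _ < T.lepb a + T.lam a by linarith⟩

lemma topI_subset_domain (a : Fin d) : T.topI a ⊆ T.domain :=
  (T.topI_subset_Ico a).trans (Ico_subset_Ico_right (T.upt_le_len _))

lemma mapsTo_toFun : MapsTo T.toFun T.domain T.domain := fun _ hx =>
  have ⟨a, ha⟩ := T.exists_mem_topI hx
  T.inv.topI_subset_domain a (T.toFun_mem_botI ha)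

lemma leftInvOn_inv_toFun : LeftInvOn T.inv.toFun T.toFun T.domain := fun x hx => by
  obtain ⟨a, ha⟩ := T.exists_mem_topI hx
  rw [T.inv.toFun_of_mem_topI (T.toFun_mem_botI ha), T.toFun_of_mem_topI ha]
  change x - T.lept a + T.lepb a - T.lepb a + T.lept a = x
  ring

lemma HasConnection.inv (h : T.HasConnection) : T.inv.HasConnection := by
  obtain ⟨k, l, m, hk, hkd, hl, hld, hm⟩ := h
  refine ⟨l, k, m, hl, hld, hk, hkd, ?_⟩
  change T.inv.toFun^[m] (T.upt k) = T.vpt l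
  rw [← hm]
  exact leftInvOn_iterate T.leftInvOn_inv_toFun T.mapsTo_toFun m (T.inv.upt_mem_domain hld)

variable {T} in
lemma NoConnections.inv (h : T.NoConnections) : T.inv.NoConnections :=
  fun hc => h hc.inv

section LastLetters

variable {n : ℕ} (T : IET (n + 1))

def lastTop : Fin (n + 1) := T.pit.symm (Fin.last n)

def lastBot : Fin (n + 1) := T.pib.symm (Fin.last n)

@[simp] lemma pit_lastTop : T.pit T.lastTop = Fin.last n := T.pit.apply_symm_apply _

@[simp] lemma pib_lastBot : T.pib T.lastBot = Fin.last n := T.pib.apply_symm_apply _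

lemma eq_lastBot_iff {a : Fin (n + 1)} : a = T.lastBot ↔ (T.pib a : ℕ) = n := by
  rw [lastBot, Equiv.eq_symm_apply, Fin.ext_iff, Fin.val_last]

lemma topI_lastTop : T.topI T.lastTop = Ico (T.upt n) T.len := by
  rw [topI, rept_eq_upt, lept, pit_lastTop, Fin.val_last, T.upt_of_le le_rfl]

lemma botI_lastBot : T.botI T.lastBot = Ico (T.vpt n) T.len := T.inv.topI_lastTop

lemma upt_add_lam_lastTop : T.upt n + T.lam T.lastTop = T.len := by
  simpa [rept, lept, T.upt_of_le] using T.rept_eq_upt T.lastTop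

lemma vpt_add_lam_lastBot : T.vpt n + T.lam T.lastBot = T.len := T.inv.upt_add_lam_lastTop

end LastLetters

section RauzyTop

variable {n : ℕ} {T : IET (n + 1)}

lemma lam_lastBot_lt_lam_lastTop (h : T.upt n < T.vpt n) :
    T.lam T.lastBot < T.lam T.lastTop := by
  linarith [T.upt_add_lam_lastTop, T.vpt_add_lam_lastBot]

lemma lastTop_ne_lastBot (h : T.upt n < T.vpt n) : T.lastTop ≠ T.lastBot := fun he =>
  (lam_lastBot_lt_lam_lastTop h).ne (by rw [he])

lemma pib_lastTop_lt (h : T.upt n < T.vpt n) : (T.pib T.lastTop : ℕ) < n := by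
  have hne : (T.pib T.lastTop : ℕ) ≠ n := fun he => lastTop_ne_lastBot h (T.eq_lastBot_iff.2 he)
  have := (T.pib T.lastTop).isLt
  omega

lemma vpt_mem_topI_lastTop (h : T.upt n < T.vpt n) : T.vpt n ∈ T.topI T.lastTop := by
  rw [topI_lastTop]
  exact ⟨h.le, T.inv.upt_lt_len n.lt_succ_self⟩

lemma irred_rauzyTop (h : T.upt n < T.vpt n) (k : ℕ) (hk : 0 < k) (hkn : k < n + 1) :
    Finset.univ.filter (fun a => (T.pit a : ℕ) < k) ≠ Finset.univ.filter
      (fun a => ((T.pib.trans (Fin.cycleIcc (T.pib T.lastTop + 1) (Fin.last n))) a : ℕ) < k) := by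
  intro heq
  have hp := pib_lastTop_lt h
  rcases le_or_gt k (T.pib T.lastTop + 1) with hkp | hkp
  · refine T.irred k hk hkn (heq.trans ?_)
    ext a
    have := (T.pib a).isLt
    simp only [Finset.mem_filter, Finset.mem_univ, true_and, Equiv.trans_apply,
      val_cycleIcc_last hp]
    split_ifs <;> omega
  · have := Finset.ext_iff.1 heq T.lastTop
    simp only [Finset.mem_filter, Finset.mem_univ, true_and, Equiv.trans_apply,
      val_cycleIcc_last hp, pit_lastTop, Fin.val_last, le_refl, if_true] at this
    exact absurd (this.2 (by omega)) (by omega)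

/-- The Rauzy–Veech induction of `T` when the last top interval is the longer one: on the bottom
row `T.lastBot` moves to just after `T.lastTop`, and `T.lastTop` loses the length of
`T.lastBot`. -/
def rauzyTop (h : T.upt n < T.vpt n) : IET (n + 1) where
  lam a := T.lam a - if a = T.lastTop then T.lam T.lastBot else 0
  lam_pos a := by
    split_ifs with ha
    · rw [ha]
      linarith [lam_lastBot_lt_lam_lastTop h]
    · simpa using T.lam_pos a
  pit := T.pit
  pib := T.pib.trans (Fin.cycleIcc (T.pib T.lastTop + 1) (Fin.last n))
  irred := irred_rauzyTop h

variable (h : T.upt n < T.vpt n)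

lemma val_rauzyTop_pib (a : Fin (n + 1)) :
    ((T.rauzyTop h).pib a : ℕ) =
      if (T.pib a : ℕ) ≤ T.pib T.lastTop then (T.pib a : ℕ)
      else if (T.pib a : ℕ) = n then (T.pib T.lastTop : ℕ) + 1 else (T.pib a : ℕ) + 1 :=
  val_cycleIcc_last (pib_lastTop_lt h) _

lemma sum_rauzyTop_lam (s : Finset (Fin (n + 1))) :
    ∑ a ∈ s, (T.rauzyTop h).lam a =
      ∑ a ∈ s, T.lam a - if T.lastTop ∈ s then T.lam T.lastBot else 0 := by
  simp only [rauzyTop, Finset.sum_sub_distrib, Finset.sum_ite_eq']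

lemma rauzyTop_len : (T.rauzyTop h).len = T.vpt n := by
  rw [len, sum_rauzyTop_lam, if_pos (Finset.mem_univ _), ← len]
  linarith [T.vpt_add_lam_lastBot]

lemma rauzyTop_domain : (T.rauzyTop h).domain = Ico 0 (T.vpt n) := by
  rw [domain, rauzyTop_len]

lemma rauzyTop_domain_subset : (T.rauzyTop h).domain ⊆ T.domain := by
  rw [rauzyTop_domain]
  exact Ico_subset_Ico_right (T.inv.upt_le_len n)

lemma rauzyTop_upt {k : ℕ} (hk : k ≤ n) : (T.rauzyTop h).upt k = T.upt k := by
  rw [upt, sum_rauzyTop_lam, if_neg, sub_zero]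
  · rfl
  · change ¬ (T.lastTop ∈ Finset.univ.filter fun a => (T.pit a : ℕ) < k)
    simp only [Finset.mem_filter, Finset.mem_univ, true_and, pit_lastTop, Fin.val_last]
    omega

lemma rauzyTop_lept (a : Fin (n + 1)) : (T.rauzyTop h).lept a = T.lept a :=
  rauzyTop_upt h (Nat.le_of_lt_succ (T.pit a).isLt)

lemma rauzyTop_topI_subset (a : Fin (n + 1)) : (T.rauzyTop h).topI a ⊆ T.topI a := by
  have hlam : (T.rauzyTop h).lam a ≤ T.lam a := by
    change T.lam a - _ ≤ T.lam a
    split_ifs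
    · linarith [T.lam_pos T.lastBot]
    · simp
  refine Ico_subset_Ico (rauzyTop_lept h a).ge ?_
  change (T.rauzyTop h).lept a + _ ≤ T.lept a + _
  linarith [rauzyTop_lept h a]

lemma rauzyTop_lepb_of_ne {a : Fin (n + 1)} (ha : a ≠ T.lastBot) :
    (T.rauzyTop h).lepb a = T.lepb a := by
  have hp := pib_lastTop_lt h
  have han : (T.pib a : ℕ) ≠ n := fun he => ha (T.eq_lastBot_iff.2 he)
  have hpa := (T.pib a).isLt
  rw [lepb, vpt, sum_rauzyTop_lam]
  rcases le_or_gt (T.pib a : ℕ) (T.pib T.lastTop) with hle | hgt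
  · have hs : Finset.univ.filter (fun b => ((T.rauzyTop h).pib b : ℕ) < (T.rauzyTop h).pib a) =
        Finset.univ.filter (fun b => (T.pib b : ℕ) < T.pib a) := by
      ext b
      have := (T.pib b).isLt
      simp only [Finset.mem_filter, Finset.mem_univ, true_and, val_rauzyTop_pib h]
      split_ifs <;> omega
    rw [hs, if_neg (by simpa using hle), sub_zero]
    rfl
  · have hs : Finset.univ.filter (fun b => ((T.rauzyTop h).pib b : ℕ) < (T.rauzyTop h).pib a) =
        insert T.lastBot (Finset.univ.filter (fun b => (T.pib b : ℕ) < T.pib a)) := by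
      ext b
      have := (T.pib b).isLt
      simp only [Finset.mem_filter, Finset.mem_univ, true_and, Finset.mem_insert,
        T.eq_lastBot_iff, val_rauzyTop_pib h]
      split_ifs <;> omega
    rw [hs, Finset.sum_insert (by simp [Fin.le_last]), if_pos (Finset.mem_insert_of_mem
      (by simpa using hgt)), add_sub_cancel_left]
    rfl

lemma rauzyTop_lepb_lastBot : (T.rauzyTop h).lepb T.lastBot = T.toFun (T.vpt n) := by
  have hp := pib_lastTop_lt h
  have hs : Finset.univ.filter
      (fun b => ((T.rauzyTop h).pib b : ℕ) < (T.rauzyTop h).pib T.lastBot) =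
        Finset.univ.filter (fun b => (T.pib b : ℕ) < T.pib T.lastTop + 1) := by
    ext b
    have := (T.pib b).isLt
    simp only [Finset.mem_filter, Finset.mem_univ, true_and, val_rauzyTop_pib h, pib_lastBot,
      Fin.val_last]
    split_ifs <;> omega
  have hrepb : T.vpt (T.pib T.lastTop + 1) = T.lepb T.lastTop + T.lam T.lastTop :=
    (T.inv.rept_eq_upt T.lastTop).symm
  have hlept : T.lept T.lastTop = T.upt n := by simp [lept]
  rw [T.toFun_of_mem_topI (vpt_mem_topI_lastTop h), lepb, vpt, sum_rauzyTop_lam, hs,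
    if_pos (by simp)]
  change T.vpt _ - _ = _
  linarith [T.upt_add_lam_lastTop, T.vpt_add_lam_lastBot]

lemma botI_subset_rauzyTop_domain {a : Fin (n + 1)} (ha : a ≠ T.lastBot) :
    T.botI a ⊆ (T.rauzyTop h).domain := by
  have han : (T.pib a : ℕ) ≠ n := fun he => ha (T.eq_lastBot_iff.2 he)
  have := (T.pib a).isLt
  rw [rauzyTop_domain]
  exact (T.inv.topI_subset_Ico a).trans
    (Ico_subset_Ico_right (T.inv.upt_mono (show (T.pib a : ℕ) + 1 ≤ n by omega)))

lemma isReturnWithinTwo_rauzyTop :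
    IsReturnWithinTwo T.toFun (T.rauzyTop h).domain (T.rauzyTop h).toFun := by
  intro x hx
  obtain ⟨a, ha'⟩ := (T.rauzyTop h).exists_mem_topI hx
  have ha := rauzyTop_topI_subset h a ha'
  rw [(T.rauzyTop h).toFun_of_mem_topI ha', rauzyTop_lept]
  by_cases hab : a = T.lastBot
  · subst hab
    right
    have hTx := T.toFun_mem_botI ha
    rw [botI_lastBot] at hTx
    have hTx' : T.toFun x ∈ T.topI T.lastTop := by
      rw [topI_lastTop]
      exact ⟨h.le.trans hTx.1, hTx.2⟩
    refine ⟨fun hJ => ?_, botI_subset_rauzyTop_domain h (lastTop_ne_lastBot h)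
      (T.toFun_mem_botI hTx'), ?_⟩
    · rw [rauzyTop_domain] at hJ
      exact (hJ.2.trans_le hTx.1).false
    · rw [rauzyTop_lepb_lastBot, T.toFun_of_mem_topI (vpt_mem_topI_lastTop h),
        T.toFun_of_mem_topI hTx', T.toFun_of_mem_topI ha]
      simp only [lepb, pib_lastBot, Fin.val_last]
      ring
  · left
    rw [rauzyTop_lepb_of_ne h hab, ← T.toFun_of_mem_topI ha]
    exact ⟨botI_subset_rauzyTop_domain h hab (T.toFun_mem_botI ha), rfl⟩

lemma exists_rauzyTop_vpt_eq {l : ℕ} (hl : 0 < l) (hln : l < n + 1) :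
    ∃ l', 0 < l' ∧ l' < n + 1 ∧ ∃ e, (T.rauzyTop h).vpt l = T.toFun^[e] (T.vpt l') := by
  set a := (T.rauzyTop h).pib.symm ⟨l, hln⟩
  have hla : (T.rauzyTop h).pib a = ⟨l, hln⟩ := by simp [a]
  have hva : (T.rauzyTop h).vpt l = (T.rauzyTop h).lepb a := by simp [lepb, hla]
  by_cases hab : a = T.lastBot
  · refine ⟨n, by linarith [pib_lastTop_lt h], n.lt_succ_self, 1, ?_⟩
    rw [hva, hab, rauzyTop_lepb_lastBot, Function.iterate_one]
  · refine ⟨T.pib a, ?_, (T.pib a).isLt, 0, by rw [hva, rauzyTop_lepb_of_ne h hab]; rfl⟩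
    have han : (T.pib a : ℕ) ≠ n := fun he => hab (T.eq_lastBot_iff.2 he)
    have := val_rauzyTop_pib h a
    rw [hla, Fin.val_mk] at this
    split_ifs at this <;> omega

lemma NoConnections.rauzyTop (hT : T.NoConnections) : (T.rauzyTop h).NoConnections := by
  rintro ⟨k, l, m, hk, hkn, hl, hln, hconn⟩
  obtain ⟨l', hl', hl'n, e, he⟩ := exists_rauzyTop_vpt_eq h hl hln
  obtain ⟨M, hM⟩ := (isReturnWithinTwo_rauzyTop h).exists_iterate_eq
    (x := (T.rauzyTop h).vpt l) ((T.rauzyTop h).inv.upt_mem_domain hln) m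
  refine hT ⟨k, l', M + e, hk, hkn, hl', hl'n, ?_⟩
  rw [Function.iterate_add_apply, ← he, ← hM, hconn, rauzyTop_upt h (by omega)]

end RauzyTop

section RauzyBot

variable {n : ℕ} {T : IET (n + 1)}

def rauzyBot (h : T.vpt n < T.upt n) : IET (n + 1) := (T.inv.rauzyTop h).inv

lemma rauzyBot_len (h : T.vpt n < T.upt n) : (T.rauzyBot h).len = T.upt n :=
  rauzyTop_len (T := T.inv) h

lemma isReturnWithinTwo_rauzyBot (h : T.vpt n < T.upt n) :
    IsReturnWithinTwo T.toFun (T.rauzyBot h).domain (T.rauzyBot h).toFun :=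
  (isReturnWithinTwo_rauzyTop (T := T.inv) h).of_inv (rauzyTop_domain_subset (T := T.inv) h)
    T.inv.mapsTo_toFun T.inv.leftInvOn_inv_toFun (T.rauzyBot h).mapsTo_toFun
    (T.rauzyBot h).leftInvOn_inv_toFun

lemma NoConnections.rauzyBot (h : T.vpt n < T.upt n) (hT : T.NoConnections) :
    (T.rauzyBot h).NoConnections :=
  (NoConnections.rauzyTop (T := T.inv) h hT.inv).inv

end RauzyBot

end IET

/-- **The Rauzy–Veech elementary step preserves the absence of connections.**  If `T` is an
i.e.t. on `d` intervals with irreducible combinatorial data and no connections, then the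
first-return map of `T` to `Î = [0, max (u_{d-1}(T), v_{d-1}(T)))` is again an i.e.t. on
`d` intervals with irreducible combinatorial data (understood modulo finitely many points),
and it has no connections. -/
theorem rauzy_veech_step_no_connections {d : ℕ} (hd : 2 ≤ d) (T : IET d)
    (hT : T.NoConnections) :
    ∃ T' : IET d,
      T'.len = max (T.upt (d-1)) (T.vpt (d-1)) ∧
      (∃ F : Finset ℝ, ∀ x ∈ T'.domain, x ∉ F →
        T'.toFun x = firstReturnMap T.toFun T'.domain x) ∧
      T'.NoConnections := by
  obtain ⟨n, rfl⟩ : ∃ n, d = n + 1 := ⟨d - 1, by omega⟩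
  rw [Nat.add_sub_cancel]
  rcases lt_trichotomy (T.upt n) (T.vpt n) with h | h | h
  · exact ⟨T.rauzyTop h, by rw [IET.rauzyTop_len, max_eq_right h.le],
      ⟨∅, fun x hx _ => (IET.isReturnWithinTwo_rauzyTop h).eq_firstReturnMap hx⟩, hT.rauzyTop h⟩
  · exact absurd ⟨n, n, 0, by omega, by omega, by omega, by omega, h.symm⟩ hT
  · exact ⟨T.rauzyBot h, by rw [IET.rauzyBot_len, max_eq_left h.le],
      ⟨∅, fun x hx _ => (IET.isReturnWithinTwo_rauzyBot h).eq_firstReturnMap hx⟩, hT.rauzyBot h⟩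

end IETPaper
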